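/- Let 1 ≤ q₁, q₂, p ≤ ∞ satisfy 1/q₁ + 1/q₂ = 1/p + 1, and let 1 ≤ r ≤ ∞. Then for all finite families {f^1_{k₁}}_{k₁=1}^{n₁} ⊂ L^{q₁}(ℝ) and {f^2_{k₂}}_{k₂=1}^{n₂} ⊂ L^{q₂}(ℝ) (Lebesgue measure on ℝ), with f*g(x) = ∫_ℝ f(x−y)g(y) dy the convolution: ‖(∑_{k₁,k₂} |f^1_{k₁} * f^2_{k₂}|^r)^{1/r}‖_{L^p(ℝ)} ≤ ‖(∑_{k₁=1}^{n₁} |f^1_{k₁}|^r)^{1/r}‖_{L^{q₁}(ℝ)} · ‖(∑_{k₂=1}^{n₂} |f^2_{k₂}|^r)^{1/r}‖_{L^{q₂}(ℝ)}, with suprema over the indices replacing the ℓ^r sums when r = ∞. -/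

import Mathlib

/-!
`lrNorm r` is the norm of `PiLp r`. For fixed `x`, the vector of convolutions `(f_{k₁} * g_{k₂})(x)`
is the Bochner integral in `ℓ^r` of `y ↦ (f_{k₁}(x - y) g_{k₂}(y))_k`, so Minkowski's inequality
`‖∫ F‖ ≤ ∫ ‖F‖` and the identity `|a ⊗ b|_r = |a|_r |b|_r` bound its norm by
`∫ |f|_r(x - y) |g|_r(y) dy`. This reduces the theorem to Young's inequality for the nonnegative
functions `|f|_r` and `|g|_r`. For finite `p` it follows by writing
`φ(x - y) ψ(y) = (φ(x - y)^q₁ ψ(y)^q₂)^(1/p) · φ(x - y)^(1 - q₁/p) · ψ(y)^(1 - q₂/p)`,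
applying Hölder's inequality with the three exponents `1/p`, `1/q₁ - 1/p`, `1/q₂ - 1/p`, and
integrating in `x` with Tonelli; for `p = ∞` it is Hölder's inequality alone.
-/

open MeasureTheory ENNReal

noncomputable def lrNorm {ι : Type} [Fintype ι] (r : ℝ≥0∞) (a : ι → ℝ) : ℝ :=
  if r = ∞ then ⨆ k, |a k| else (∑ k, |a k| ^ r.toReal) ^ (1 / r.toReal)

namespace PiLp

variable {ι : Type*} [Fintype ι] {β : ι → Type*} [∀ i, SeminormedAddCommGroup (β i)]
  {p : ℝ≥0∞} [Fact (1 ≤ p)]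

theorem enorm_eq_sum (hp : 0 < p.toReal) (x : PiLp p β) :
    ‖x‖ₑ = (∑ i, ‖x i‖ₑ ^ p.toReal) ^ (1 / p.toReal) := by
  simpa [← edist_zero_right] using edist_eq_sum hp x 0

theorem enorm_eq_iSup (x : PiLp ∞ β) : ‖x‖ₑ = ⨆ i, ‖x i‖ₑ := by
  simpa [← edist_zero_right] using edist_eq_iSup x 0

theorem enorm_toLp_prod_mul {κ R : Type*} [Fintype κ] [SeminormedRing R] [NormMulClass R]
    (a : ι → R) (b : κ → R) :
    ‖WithLp.toLp p (fun k : ι × κ => a k.1 * b k.2)‖ₑ =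
      ‖WithLp.toLp p a‖ₑ * ‖WithLp.toLp p b‖ₑ := by
  rcases eq_or_ne p ∞ with rfl | hp
  · simp only [enorm_eq_iSup, enorm_mul, iSup_prod, ENNReal.iSup_mul]
    simp only [ENNReal.mul_iSup]
  · have hρ : 0 < p.toReal := ENNReal.toReal_pos (zero_lt_one.trans_le Fact.out).ne' hp
    simp only [enorm_eq_sum hρ, enorm_mul]
    rw [← ENNReal.mul_rpow_of_nonneg _ _ (by positivity), Finset.sum_mul_sum,
      ← Finset.univ_product_univ, Finset.sum_product]
    simp_rw [ENNReal.mul_rpow_of_nonneg _ _ hρ.le]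

theorem enorm_toLp_integral_le {α : Type*} [MeasurableSpace α] {μ : Measure α}
    {E : ι → Type*} [∀ i, NormedAddCommGroup (E i)] [∀ i, NormedSpace ℝ (E i)]
    [∀ i, CompleteSpace (E i)] {u : ∀ i, α → E i} (hu : ∀ i, AEStronglyMeasurable (u i) μ) :
    ‖WithLp.toLp p (fun i => ∫ y, u i y ∂μ)‖ₑ ≤ ∫⁻ y, ‖WithLp.toLp p (fun i => u i y)‖ₑ ∂μ := by
  by_cases hint : ∀ i, Integrable (u i) μ
  · have : WithLp.toLp p (fun i => ∫ y, u i y ∂μ) = ∫ y, WithLp.toLp p (fun i => u i y) ∂μ := by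
      ext i
      exact (eval_integral_piLp (f := fun y => WithLp.toLp p (fun i => u i y)) hint i).symm
    rw [this]
    exact enorm_integral_le_lintegral_enorm _
  · -- a non-integrable component makes the right-hand side infinite
    obtain ⟨i, hi⟩ := not_forall.mp hint
    have hinf : ∫⁻ y, ‖u i y‖ₑ ∂μ = ∞ := by
      simpa [Integrable, hu i, HasFiniteIntegral] using hi
    calc _ ≤ ∞ := le_top
      _ = ∫⁻ y, ‖u i y‖ₑ ∂μ := hinf.symm
      _ ≤ _ := lintegral_mono fun y => enorm_apply_le (WithLp.toLp p (fun i => u i y)) i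

end PiLp

theorem lrNorm_eq_norm_toLp {ι : Type} [Fintype ι] {r : ℝ≥0∞} (hr : r ≠ 0) (a : ι → ℝ) :
    lrNorm r a = ‖WithLp.toLp r a‖ := by
  unfold lrNorm
  split_ifs with h
  · subst h
    simp [PiLp.norm_eq_ciSup]
  · simp [PiLp.norm_eq_sum (ENNReal.toReal_pos hr h)]

section Holder

variable {α : Type*} [MeasurableSpace α] {μ : Measure α}

theorem lintegral_mul_le_eLpNorm_mul_eLpNorm {p q : ℝ≥0∞} [p.HolderConjugate q]
    {f g : α → ℝ≥0∞} (hf : AEMeasurable f μ) (hg : AEMeasurable g μ) :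
    ∫⁻ x, f x * g x ∂μ ≤ eLpNorm f p μ * eLpNorm g q μ := by
  rcases eq_or_ne p ∞ with rfl | hp
  · obtain rfl : q = 1 := (HolderConjugate.eq_top_iff_eq_one ∞ q).mp rfl
    simp only [eLpNorm_exponent_top, eLpNorm_one_eq_lintegral_enorm, enorm_eq_self]
    rw [← lintegral_const_mul'' _ hg]
    refine lintegral_mono_ae ?_
    filter_upwards [ae_le_eLpNormEssSup (f := f)] with x hx
    exact mul_le_mul_left (by simpa using hx) _
  rcases eq_or_ne q ∞ with rfl | hq
  · obtain rfl : p = 1 := (HolderConjugate.eq_top_iff_eq_one ∞ p).mp rfl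
    simp only [eLpNorm_exponent_top, eLpNorm_one_eq_lintegral_enorm, enorm_eq_self]
    rw [← lintegral_mul_const'' _ hf]
    refine lintegral_mono_ae ?_
    filter_upwards [ae_le_eLpNormEssSup (f := g)] with x hx
    exact mul_le_mul_right (by simpa using hx) _
  have hp0 := HolderConjugate.ne_zero p q
  have hq0 := HolderConjugate.ne_zero q p
  have hconj : p.toReal.HolderConjugate q.toReal := by
    simpa using HolderTriple.toReal 1 (ENNReal.toReal_pos hp0 hp) (ENNReal.toReal_pos hq0 hq)
  simpa [eLpNorm_eq_lintegral_rpow_enorm_toReal, hp0, hq0, hp, hq] using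
    ENNReal.lintegral_mul_le_Lp_mul_Lq μ hconj hf hg

theorem lintegral_mul_mul_rpow_le {F G H : α → ℝ≥0∞} (hF : AEMeasurable F μ)
    (hG : AEMeasurable G μ) (hH : AEMeasurable H μ) {s t u : ℝ} (hs : 0 ≤ s) (ht : 0 ≤ t)
    (hu : 0 ≤ u) (hstu : s + t + u = 1) :
    ∫⁻ x, F x ^ s * G x ^ t * H x ^ u ∂μ ≤
      (∫⁻ x, F x ∂μ) ^ s * (∫⁻ x, G x ∂μ) ^ t * (∫⁻ x, H x ∂μ) ^ u := by
  have := ENNReal.lintegral_prod_norm_pow_le (μ := μ) Finset.univ (f := ![F, G, H])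
    (p := ![s, t, u]) (fun i _ => by fin_cases i <;> assumption)
    (by simpa [Fin.sum_univ_three] using hstu) (fun i _ => by fin_cases i <;> assumption)
  simpa [Fin.prod_univ_three, mul_assoc] using this

theorem ENNReal.mul_eq_young_interpolation {a b c : ℝ} (ha : 1 ≤ a) (hb : 1 ≤ b) (hc : 0 < c)
    (habc : 1 / a + 1 / b = 1 / c + 1) (u v : ℝ≥0∞) :
    u * v = (u ^ a * v ^ b) ^ (1 / c) * (u ^ a) ^ (1 / a - 1 / c) * (v ^ b) ^ (1 / b - 1 / c) := by
  have ha' : 1 / a ≤ 1 := div_le_one_of_le₀ ha (by linarith)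
  have hb' : 1 / b ≤ 1 := div_le_one_of_le₀ hb (by linarith)
  have split : ∀ (w : ℝ≥0∞) {e : ℝ}, 1 ≤ e → 1 / c ≤ 1 / e →
      w = w ^ (e * (1 / c)) * w ^ (e * (1 / e - 1 / c)) := fun w e he hce => by
    rw [← ENNReal.rpow_add_of_nonneg _ _ (by positivity) (by nlinarith), ← mul_add,
      add_sub_cancel, mul_one_div_cancel (by linarith), ENNReal.rpow_one]
  conv_lhs => rw [split u ha (by linarith), split v hb (by linarith)]
  rw [ENNReal.mul_rpow_of_nonneg _ _ (by positivity)]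
  simp only [← ENNReal.rpow_mul]
  ring

theorem lintegral_mul_le_young_interpolation {a b c : ℝ} (ha : 1 ≤ a) (hb : 1 ≤ b) (hc : 0 < c)
    (habc : 1 / a + 1 / b = 1 / c + 1) {F G : α → ℝ≥0∞} (hF : AEMeasurable F μ)
    (hG : AEMeasurable G μ) :
    ∫⁻ x, F x * G x ∂μ ≤ (∫⁻ x, F x ^ a * G x ^ b ∂μ) ^ (1 / c) *
      (∫⁻ x, F x ^ a ∂μ) ^ (1 / a - 1 / c) * (∫⁻ x, G x ^ b ∂μ) ^ (1 / b - 1 / c) := by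
  have ha' : 1 / a ≤ 1 := div_le_one_of_le₀ ha (by linarith)
  have hb' : 1 / b ≤ 1 := div_le_one_of_le₀ hb (by linarith)
  simp_rw [ENNReal.mul_eq_young_interpolation ha hb hc habc (F _)]
  exact lintegral_mul_mul_rpow_le ((hF.pow_const a).mul (hG.pow_const b)) (hF.pow_const a)
    (hG.pow_const b) (by positivity) (by linarith) (by linarith) (by linarith)

end Holder

theorem ENNReal.young_exponents_toReal {p q₁ q₂ : ℝ≥0∞} (hq₁ : 1 ≤ q₁) (hq₂ : 1 ≤ q₂)
    (h : 1 / q₁ + 1 / q₂ = 1 / p + 1) (hp : p ≠ ∞) :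
    q₁ ≠ ∞ ∧ q₂ ≠ ∞ ∧ p ≠ 0 ∧ 1 / q₁.toReal + 1 / q₂.toReal = 1 / p.toReal + 1 := by
  simp only [one_div] at h ⊢
  have h₁ : q₁⁻¹ ≤ 1 := ENNReal.inv_le_one.mpr hq₁
  have h₂ : q₂⁻¹ ≤ 1 := ENNReal.inv_le_one.mpr hq₂
  have hp' : 0 < p⁻¹ := ENNReal.inv_pos.mpr hp
  have hq₁' : q₁ ≠ ∞ := by
    rintro rfl
    simp only [inv_top, zero_add] at h
    have : 1 < q₂⁻¹ := by rw [h, add_comm]; exact ENNReal.lt_add_right one_ne_top hp'.ne'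
    exact absurd h₂ this.not_ge
  have hq₂' : q₂ ≠ ∞ := by
    rintro rfl
    simp only [inv_top, add_zero] at h
    have : 1 < q₁⁻¹ := by rw [h, add_comm]; exact ENNReal.lt_add_right one_ne_top hp'.ne'
    exact absurd h₁ this.not_ge
  have hp0 : p ≠ 0 := by
    rintro rfl
    simp only [inv_zero, top_add] at h
    exact ENNReal.add_ne_top.mpr ⟨(h₁.trans_lt one_lt_top).ne, (h₂.trans_lt one_lt_top).ne⟩ h
  refine ⟨hq₁', hq₂', hp0, ?_⟩
  have := congrArg ENNReal.toReal h
  rwa [ENNReal.toReal_add (by simpa using (zero_lt_one.trans_le hq₁).ne')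
    (by simpa using (zero_lt_one.trans_le hq₂).ne'), ENNReal.toReal_add (by simpa using hp0)
    one_ne_top, toReal_inv, toReal_inv, toReal_inv, toReal_one] at this

section Young

variable {G : Type*} [MeasurableSpace G] {μ : Measure G}

theorem lintegral_lconvolution [AddGroup G] [MeasurableAdd₂ G] [MeasurableNeg G] [SFinite μ]
    [μ.IsAddLeftInvariant] {f g : G → ℝ≥0∞}
    (hf : AEMeasurable f μ) (hg : AEMeasurable g μ) :
    ∫⁻ x, (f ⋆ₗ[μ] g) x ∂μ = (∫⁻ x, f x ∂μ) * ∫⁻ x, g x ∂μ := by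
  simp only [lconvolution_def]
  rw [lintegral_lintegral_swap (by fun_prop), ← lintegral_mul_const'' _ hf]
  refine lintegral_congr fun y => ?_
  rw [lintegral_const_mul'' _ (f := fun x => g (-y + x))
    (hg.comp_quasiMeasurePreserving (measurePreserving_add_left μ (-y)).quasiMeasurePreserving),
    lintegral_add_left_eq_self]

variable [AddCommGroup G] [MeasurableAdd₂ G] [MeasurableNeg G] [μ.IsAddLeftInvariant]
  [μ.IsNegInvariant]

theorem enorm_toLp_convolution_le {ι₁ ι₂ : Type*} [Fintype ι₁] [Fintype ι₂] {r : ℝ≥0∞}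
    [Fact (1 ≤ r)] {f : ι₁ → G → ℝ} {g : ι₂ → G → ℝ} (hf : ∀ k, AEStronglyMeasurable (f k) μ)
    (hg : ∀ k, AEStronglyMeasurable (g k) μ) (x : G) :
    ‖WithLp.toLp r fun k : ι₁ × ι₂ => ∫ y, f k.1 (x - y) * g k.2 y ∂μ‖ₑ ≤
      ((fun y => ‖WithLp.toLp r fun k => g k y‖ₑ) ⋆ₗ[μ]
        (fun y => ‖WithLp.toLp r fun k => f k y‖ₑ)) x := by
  have hx := (Measure.measurePreserving_sub_left μ x).quasiMeasurePreserving
  calc _ ≤ ∫⁻ y, ‖WithLp.toLp r fun k : ι₁ × ι₂ => f k.1 (x - y) * g k.2 y‖ₑ ∂μ :=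
        PiLp.enorm_toLp_integral_le fun k => ((hf k.1).comp_quasiMeasurePreserving hx).mul (hg k.2)
    _ = _ := by
        simp only [lconvolution_def, neg_add_eq_sub]
        refine lintegral_congr fun y => ?_
        rw [mul_comm]
        exact PiLp.enorm_toLp_prod_mul (fun k => f k (x - y)) (fun k => g k y)

variable [SFinite μ]

theorem lconvolution_rpow_le {a b c : ℝ} (ha : 1 ≤ a) (hb : 1 ≤ b) (hc : 0 < c)
    (habc : 1 / a + 1 / b = 1 / c + 1) {f g : G → ℝ≥0∞} (hf : AEMeasurable f μ)
    (hg : AEMeasurable g μ) (x : G) :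
    (f ⋆ₗ[μ] g) x ^ c ≤ ((fun y => f y ^ a) ⋆ₗ[μ] (fun y => g y ^ b)) x *
      ((∫⁻ y, f y ^ a ∂μ) ^ (c * (1 / a - 1 / c)) *
        (∫⁻ y, g y ^ b ∂μ) ^ (c * (1 / b - 1 / c))) := by
  have h := lintegral_mul_le_young_interpolation ha hb hc habc hf
    (G := fun y => g (-y + x)) (by fun_prop)
  simp only [neg_add_eq_sub, lintegral_sub_left_eq_self (fun y => g y ^ b)] at h
  simp only [lconvolution_def, neg_add_eq_sub]
  calc _ ≤ _ := ENNReal.rpow_le_rpow h hc.le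
    _ = _ := by
      rw [mul_assoc, ENNReal.mul_rpow_of_nonneg _ _ hc.le, ENNReal.mul_rpow_of_nonneg _ _ hc.le,
        ← ENNReal.rpow_mul, ← ENNReal.rpow_mul, ← ENNReal.rpow_mul, one_div_mul_cancel hc.ne',
        ENNReal.rpow_one, mul_comm (1 / a - 1 / c), mul_comm (1 / b - 1 / c)]

theorem lintegral_lconvolution_rpow_le {a b c : ℝ} (ha : 1 ≤ a) (hb : 1 ≤ b) (hc : 0 < c)
    (habc : 1 / a + 1 / b = 1 / c + 1) {f g : G → ℝ≥0∞} (hf : AEMeasurable f μ)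
    (hg : AEMeasurable g μ) :
    (∫⁻ x, (f ⋆ₗ[μ] g) x ^ c ∂μ) ^ (1 / c) ≤
      (∫⁻ x, f x ^ a ∂μ) ^ (1 / a) * (∫⁻ x, g x ^ b ∂μ) ^ (1 / b) := by
  set A := ∫⁻ x, f x ^ a ∂μ
  set B := ∫⁻ x, g x ^ b ∂μ
  have ha' : 1 / a ≤ 1 := div_le_one_of_le₀ ha (by linarith)
  have hb' : 1 / b ≤ 1 := div_le_one_of_le₀ hb (by linarith)
  have hpow : ∀ (X : ℝ≥0∞) {e : ℝ}, 1 ≤ e → 1 / c ≤ 1 / e →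
      X * X ^ (c * (1 / e - 1 / c)) = X ^ (c / e) := fun X e he hce => by
    have hnn : 0 ≤ c * (1 / e - 1 / c) := mul_nonneg hc.le (by linarith)
    calc X * X ^ (c * (1 / e - 1 / c)) = X ^ (1 + c * (1 / e - 1 / c)) := by
          rw [ENNReal.rpow_add_of_nonneg _ _ zero_le_one hnn, ENNReal.rpow_one]
      _ = X ^ (c / e) := by congr 1; field_simp; ring
  calc (∫⁻ x, (f ⋆ₗ[μ] g) x ^ c ∂μ) ^ (1 / c)
      ≤ (∫⁻ x, ((fun y => f y ^ a) ⋆ₗ[μ] (fun y => g y ^ b)) x *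
          (A ^ (c * (1 / a - 1 / c)) * B ^ (c * (1 / b - 1 / c))) ∂μ) ^ (1 / c) := by
        gcongr with x
        exact lconvolution_rpow_le ha hb hc habc hf hg x
    _ = (A * B * (A ^ (c * (1 / a - 1 / c)) * B ^ (c * (1 / b - 1 / c)))) ^ (1 / c) := by
        rw [lintegral_mul_const'' _ (aemeasurable_lconvolution (hf.pow_const a) (hg.pow_const b)),
          lintegral_lconvolution (hf.pow_const a) (hg.pow_const b)]
    _ = (A ^ (c / a) * B ^ (c / b)) ^ (1 / c) := by
        rw [← hpow A ha (by linarith), ← hpow B hb (by linarith), mul_mul_mul_comm]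
    _ = A ^ (1 / a) * B ^ (1 / b) := by
        rw [ENNReal.mul_rpow_of_nonneg _ _ (by positivity), ← ENNReal.rpow_mul, ← ENNReal.rpow_mul]
        field_simp

theorem eLpNorm_lconvolution_le {p q₁ q₂ : ℝ≥0∞} (hq₁ : 1 ≤ q₁) (hq₂ : 1 ≤ q₂)
    (hpq : 1 / q₁ + 1 / q₂ = 1 / p + 1) {f g : G → ℝ≥0∞} (hf : AEMeasurable f μ)
    (hg : AEMeasurable g μ) :
    eLpNorm (f ⋆ₗ[μ] g) p μ ≤ eLpNorm f q₁ μ * eLpNorm g q₂ μ := by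
  rcases eq_or_ne p ∞ with rfl | hp
  · have : q₁.HolderConjugate q₂ := holderConjugate_iff.mpr (by simpa using hpq)
    rw [eLpNorm_exponent_top]
    refine eLpNormEssSup_le_of_ae_enorm_bound (ae_of_all _ fun x => ?_)
    have hx := Measure.measurePreserving_sub_left μ x
    calc ‖(f ⋆ₗ[μ] g) x‖ₑ = ∫⁻ y, f y * g (x - y) ∂μ := by
          simp [lconvolution_def, neg_add_eq_sub]
      _ ≤ eLpNorm f q₁ μ * eLpNorm (fun y => g (x - y)) q₂ μ :=
          lintegral_mul_le_eLpNorm_mul_eLpNorm hf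
            (hg.comp_quasiMeasurePreserving hx.quasiMeasurePreserving)
      _ = eLpNorm f q₁ μ * eLpNorm g q₂ μ := by
          rw [← eLpNorm_comp_measurePreserving hg.aestronglyMeasurable hx]; rfl
  · obtain ⟨hq₁', hq₂', hp0, hpq'⟩ := ENNReal.young_exponents_toReal hq₁ hq₂ hpq hp
    have h₁ : 1 ≤ q₁.toReal := by simpa using ENNReal.toReal_mono hq₁' hq₁
    have h₂ : 1 ≤ q₂.toReal := by simpa using ENNReal.toReal_mono hq₂' hq₂
    simpa [eLpNorm_eq_lintegral_rpow_enorm_toReal, hp, hp0, hq₁', hq₂',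
      (zero_lt_one.trans_le hq₁).ne', (zero_lt_one.trans_le hq₂).ne'] using
      lintegral_lconvolution_rpow_le h₁ h₂ (ENNReal.toReal_pos hp0 hp) hpq' hf hg

end Young

theorem statement19_general (q₁ q₂ p : ℝ≥0∞) (hq₁ : 1 ≤ q₁) (hq₂ : 1 ≤ q₂)
    (hYoung : 1 / q₁ + 1 / q₂ = 1 / p + 1) (r : ℝ≥0∞) (hr : 1 ≤ r)
    (n₁ n₂ : ℕ) (f : Fin n₁ → ℝ → ℝ) (g : Fin n₂ → ℝ → ℝ)
    (hf : ∀ k₁, MemLp (f k₁) q₁ volume) (hg : ∀ k₂, MemLp (g k₂) q₂ volume) :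
    eLpNorm
        (fun x => lrNorm r fun k : Fin n₁ × Fin n₂ => ∫ y : ℝ, f k.1 (x - y) * g k.2 y)
        p volume
      ≤ eLpNorm (fun x => lrNorm r fun k₁ : Fin n₁ => f k₁ x) q₁ volume *
        eLpNorm (fun x => lrNorm r fun k₂ : Fin n₂ => g k₂ x) q₂ volume := by
  have : Fact (1 ≤ r) := ⟨hr⟩
  have hr0 : r ≠ 0 := (zero_lt_one.trans_le hr).ne'
  set F : ℝ → PiLp r (fun _ : Fin n₁ => ℝ) := fun x => WithLp.toLp r fun k => f k x
  set G : ℝ → PiLp r (fun _ : Fin n₂ => ℝ) := fun x => WithLp.toLp r fun k => g k x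
  have hF : MemLp F q₁ volume := memLp_piLp_iff.mpr hf
  have hG : MemLp G q₂ volume := memLp_piLp_iff.mpr hg
  calc _ ≤ eLpNorm ((fun y => ‖G y‖ₑ) ⋆ₗ (fun y => ‖F y‖ₑ)) p volume := by
        refine eLpNorm_mono_enorm fun x => ?_
        rw [lrNorm_eq_norm_toLp hr0, enorm_norm, enorm_eq_self]
        exact enorm_toLp_convolution_le (fun k => (hf k).1) (fun k => (hg k).1) x
    _ ≤ eLpNorm (fun y => ‖G y‖ₑ) q₂ volume * eLpNorm (fun y => ‖F y‖ₑ) q₁ volume :=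
        eLpNorm_lconvolution_le hq₂ hq₁ (by rw [add_comm]; exact hYoung) hG.1.enorm hF.1.enorm
    _ = _ := by
        simp_rw [mul_comm, eLpNorm_enorm, lrNorm_eq_norm_toLp hr0, eLpNorm_norm, F, G]

/-- Vector-valued Young inequality for the convolution: if
`1/q₁ + 1/q₂ = 1/p + 1`, then
`‖(∑_{k₁,k₂} |f^1_{k₁} * f^2_{k₂}|^r)^{1/r}‖_{L^p(ℝ)}
  ≤ ‖(∑_{k₁} |f^1_{k₁}|^r)^{1/r}‖_{L^{q₁}(ℝ)} ‖(∑_{k₂} |f^2_{k₂}|^r)^{1/r}‖_{L^{q₂}(ℝ)}`. -/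
theorem statement19 (q₁ q₂ p : ℝ≥0∞) (hq₁ : 1 ≤ q₁) (hq₂ : 1 ≤ q₂) (hp : 1 ≤ p)
    (hYoung : 1 / q₁ + 1 / q₂ = 1 / p + 1) (r : ℝ≥0∞) (hr : 1 ≤ r)
    (n₁ n₂ : ℕ) (f : Fin n₁ → ℝ → ℝ) (g : Fin n₂ → ℝ → ℝ)
    (hf : ∀ k₁, MemLp (f k₁) q₁ volume) (hg : ∀ k₂, MemLp (g k₂) q₂ volume) :
    eLpNorm
        (fun x => lrNorm r fun k : Fin n₁ × Fin n₂ => ∫ y : ℝ, f k.1 (x - y) * g k.2 y)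
        p volume
      ≤ eLpNorm (fun x => lrNorm r fun k₁ : Fin n₁ => f k₁ x) q₁ volume *
        eLpNorm (fun x => lrNorm r fun k₂ : Fin n₂ => g k₂ x) q₂ volume :=
  statement19_general q₁ q₂ p hq₁ hq₂ hYoung r hr n₁ n₂ f g hf hg
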